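/- Let σ₁, σ₂, σ₃ : ℝ → ℝ be smooth functions and τ ∈ ℂ with τ + σⱼ(xⱼ) ≠ 0 everywhere. Define the stretched derivatives ∂̃ⱼ = (τ/(τ+σⱼ(xⱼ)))∂ⱼ and Π(τ,x) = Πᵢ (τ+σᵢ(xᵢ))/τ. Then for every C² function u on an open set of ℝ³ with values in ℂ², Π(τ,x)·(Σⱼ Aⱼ∂̃ⱼ − τ)(Σⱼ Aⱼ∂̃ⱼ + τ)u = (p(τ,x,∂) − τ²Π(τ,x))u, where p(τ,x,∂)u = Σⱼ ∂ⱼ( ((τ+σ_{j+1}(x_{j+1}))(τ+σ_{j+2}(x_{j+2})))/(τ(τ+σⱼ(xⱼ))) ∂ⱼu ) with indices taken mod 3. -/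

import Mathlib

open Matrix

noncomputable def A1 : Matrix (Fin 2) (Fin 2) ℂ := !![1, 0; 0, -1]
noncomputable def A2 : Matrix (Fin 2) (Fin 2) ℂ := !![0, 1; 1, 0]
noncomputable def A3 : Matrix (Fin 2) (Fin 2) ℂ := !![0, Complex.I; -Complex.I, 0]
noncomputable def PA : Fin 3 → Matrix (Fin 2) (Fin 2) ℂ := ![A1, A2, A3]

/-- the `j`-th partial derivative of a `ℂ²`-valued function on `ℝ³` -/
noncomputable def pd (v : (Fin 3 → ℝ) → (Fin 2 → ℂ)) (j : Fin 3) (x : Fin 3 → ℝ) :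
    Fin 2 → ℂ :=
  fderiv ℝ v x (Pi.single j 1)

/-- the stretched derivative `∂̃ⱼ = (τ/(τ+σⱼ(xⱼ))) ∂ⱼ` -/
noncomputable def stD (σ : Fin 3 → ℝ → ℝ) (τ : ℂ) (j : Fin 3)
    (v : (Fin 3 → ℝ) → (Fin 2 → ℂ)) (x : Fin 3 → ℝ) : Fin 2 → ℂ :=
  (τ / (τ + σ j (x j))) • pd v j x

/-- the stretched Dirac operator `Σⱼ Aⱼ ∂̃ⱼ` -/
noncomputable def dirac (σ : Fin 3 → ℝ → ℝ) (τ : ℂ)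
    (v : (Fin 3 → ℝ) → (Fin 2 → ℂ)) (x : Fin 3 → ℝ) : Fin 2 → ℂ :=
  ∑ j : Fin 3, (PA j).mulVec (stD σ τ j v x)

/-- the divergence-form operator `p(τ,x,∂)`, indices mod 3 -/
noncomputable def pOp (σ : Fin 3 → ℝ → ℝ) (τ : ℂ)
    (v : (Fin 3 → ℝ) → (Fin 2 → ℂ)) (x : Fin 3 → ℝ) : Fin 2 → ℂ :=
  ∑ j : Fin 3,
    pd (fun y =>
      (((τ + σ (j + 1) (y (j + 1))) * (τ + σ (j + 2) (y (j + 2)))) /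
          (τ * (τ + σ j (y j)))) • pd v j y) j x

namespace SHaux

lemma PA_sq (j : Fin 3) : PA j * PA j = 1 := by
  fin_cases j <;>
    · ext i k
      fin_cases i <;> fin_cases k <;>
        simp [PA, A1, A2, A3, Matrix.mul_apply, Fin.sum_univ_two, Matrix.one_apply]

lemma PA_anticomm {j k : Fin 3} (h : j ≠ k) : PA j * PA k = -(PA k * PA j) := by
  fin_cases j <;> fin_cases k <;> first
    | exact absurd rfl h
    | · ext i m
        fin_cases i <;> fin_cases m <;>
          simp [PA, A1, A2, A3, Matrix.mul_apply, Fin.sum_univ_two]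

/-- mulVec as a real CLM -/
noncomputable def mvL (M : Matrix (Fin 2) (Fin 2) ℂ) : (Fin 2 → ℂ) →L[ℝ] (Fin 2 → ℂ) :=
  LinearMap.toContinuousLinearMap ((Matrix.mulVecLin M).restrictScalars ℝ)

lemma mvL_apply (M : Matrix (Fin 2) (Fin 2) ℂ) (v : Fin 2 → ℂ) : mvL M v = M.mulVec v := rfl

lemma mulVec_sum (M : Matrix (Fin 2) (Fin 2) ℂ) (f : Fin 3 → Fin 2 → ℂ) :
    M.mulVec (∑ k : Fin 3, f k) = ∑ k : Fin 3, M.mulVec (f k) :=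
  map_sum (mvL M) f Finset.univ

lemma pd_clm (L : (Fin 2 → ℂ) →L[ℝ] (Fin 2 → ℂ)) {v : (Fin 3 → ℝ) → Fin 2 → ℂ}
    {x : Fin 3 → ℝ} (hv : DifferentiableAt ℝ v x) (j : Fin 3) :
    pd (fun y => L (v y)) j x = L (pd v j x) := by
  unfold pd
  rw [show (fun y => L (v y)) = (L ∘ v) from rfl, fderiv_comp x L.differentiableAt hv,
    ContinuousLinearMap.fderiv]
  rfl

lemma pd_add {v w : (Fin 3 → ℝ) → Fin 2 → ℂ} {x : Fin 3 → ℝ}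
    (hv : DifferentiableAt ℝ v x) (hw : DifferentiableAt ℝ w x) (j : Fin 3) :
    pd (fun y => v y + w y) j x = pd v j x + pd w j x := by
  unfold pd; rw [fderiv_fun_add hv hw]; rfl

lemma pd_const_smul {v : (Fin 3 → ℝ) → Fin 2 → ℂ} {x : Fin 3 → ℝ}
    (hv : DifferentiableAt ℝ v x) (c : ℂ) (j : Fin 3) :
    pd (fun y => c • v y) j x = c • pd v j x := by
  unfold pd; rw [fderiv_fun_const_smul hv c]; rfl

lemma pd_smul {c : (Fin 3 → ℝ) → ℂ} {v : (Fin 3 → ℝ) → Fin 2 → ℂ} {x : Fin 3 → ℝ}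
    (hc : DifferentiableAt ℝ c x) (hv : DifferentiableAt ℝ v x) (j : Fin 3) :
    pd (fun y => c y • v y) j x
      = (fderiv ℝ c x (Pi.single j 1)) • v x + c x • pd v j x := by
  unfold pd
  rw [fderiv_fun_smul hc hv]
  simp only [ContinuousLinearMap.add_apply, ContinuousLinearMap.smul_apply,
    ContinuousLinearMap.smulRight_apply]
  exact add_comm _ _

lemma pd_sum {v : Fin 3 → (Fin 3 → ℝ) → Fin 2 → ℂ} {x : Fin 3 → ℝ}
    (hv : ∀ k, DifferentiableAt ℝ (v k) x) (j : Fin 3) :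
    pd (fun y => ∑ k : Fin 3, v k y) j x = ∑ k : Fin 3, pd (v k) j x := by
  unfold pd
  rw [fderiv_fun_sum fun k _ => hv k]
  simp

lemma fderiv_coord_ne {h : ℝ → ℂ} (hh : Differentiable ℝ h) {j k : Fin 3} (hjk : j ≠ k)
    (x : Fin 3 → ℝ) :
    fderiv ℝ (fun y : Fin 3 → ℝ => h (y j)) x (Pi.single k 1) = 0 := by
  have e : (fun y : Fin 3 → ℝ => h (y j))
      = h ∘ (ContinuousLinearMap.proj j : (Fin 3 → ℝ) →L[ℝ] ℝ) := rfl
  rw [e, fderiv_comp x (hh _) (ContinuousLinearMap.proj j).differentiableAt,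
    ContinuousLinearMap.fderiv]
  simp only [ContinuousLinearMap.coe_comp', Function.comp_apply,
    ContinuousLinearMap.proj_apply]
  rw [Pi.single_eq_of_ne hjk, map_zero]

lemma pd_symm {u : (Fin 3 → ℝ) → Fin 2 → ℂ} {x : Fin 3 → ℝ}
    (hu : ContDiffAt ℝ 2 u x) (j k : Fin 3) :
    pd (fun y => pd u j y) k x = pd (fun y => pd u k y) j x := by
  have hd : DifferentiableAt ℝ (fderiv ℝ u) x :=
    (hu.fderiv_right (m := 1) (by norm_num)).differentiableAt one_ne_zero
  have hs := hu.isSymmSndFDerivAt (by simp)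
  have key : ∀ m n : Fin 3, fderiv ℝ (fun y => fderiv ℝ u y (Pi.single m 1)) x (Pi.single n 1)
      = fderiv ℝ (fderiv ℝ u) x (Pi.single n 1) (Pi.single m 1) := by
    intro m n
    have e : (fun y => fderiv ℝ u y (Pi.single m 1))
        = (ContinuousLinearMap.apply ℝ (Fin 2 → ℂ) (Pi.single m 1)) ∘ (fderiv ℝ u) := rfl
    rw [e, fderiv_comp x (ContinuousLinearMap.apply ℝ (Fin 2 → ℂ)
      (Pi.single m 1)).differentiableAt hd, ContinuousLinearMap.fderiv]
    rfl
  unfold pd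
  rw [key, key, hs.eq]

lemma sum3_cancel {M : Type*} [AddCommGroup M] (T : Fin 3 → Fin 3 → M)
    (h : ∀ j k, j ≠ k → T j k = - T k j) :
    ∑ j : Fin 3, ∑ k : Fin 3, T j k = ∑ j : Fin 3, T j j := by
  simp only [Fin.sum_univ_three]
  rw [h 0 1 (by decide), h 0 2 (by decide), h 1 2 (by decide)]
  abel

section coeffs

variable (σ : Fin 3 → ℝ → ℝ) (τ : ℂ)

/-- the stretching coefficient `τ/(τ+σⱼ(yⱼ))` -/
noncomputable def aF (j : Fin 3) (y : Fin 3 → ℝ) : ℂ := τ / (τ + σ j (y j))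

/-- the off-index coefficient `(τ+σ_{j+1})(τ+σ_{j+2})/τ²` -/
noncomputable def bF (j : Fin 3) (y : Fin 3 → ℝ) : ℂ :=
  ((τ + σ (j + 1) (y (j + 1))) * (τ + σ (j + 2) (y (j + 2)))) / τ ^ 2

variable (hσ : ∀ j, ContDiff ℝ (⊤ : ℕ∞) (σ j)) (hτσ : ∀ (j : Fin 3) (t : ℝ), τ + σ j t ≠ 0)

include hσ hτσ in
lemma aF_contDiff (j : Fin 3) : ContDiff ℝ (⊤ : ℕ∞) (aF σ τ j) := by
  have h : ContDiff ℝ (⊤ : ℕ∞) (fun y : Fin 3 → ℝ => τ * (τ + (σ j (y j) : ℂ))⁻¹) :=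
    contDiff_const.mul ((contDiff_const.add (Complex.ofRealCLM.contDiff.comp
      ((hσ j).comp (ContinuousLinearMap.proj (R := ℝ) (φ := fun _ : Fin 3 => ℝ) j).contDiff))).fun_inv fun y => hτσ j (y j))
  unfold aF
  simpa only [div_eq_mul_inv] using h

include hσ hτσ in
lemma aF_fderiv_ne {j k : Fin 3} (hjk : j ≠ k) (x : Fin 3 → ℝ) :
    fderiv ℝ (aF σ τ k) x (Pi.single j 1) = 0 := by
  have h1 : Differentiable ℝ (fun t : ℝ => τ / (τ + (σ k t : ℂ))) := by
    have h : ContDiff ℝ (⊤ : ℕ∞) (fun t : ℝ => τ * (τ + (σ k t : ℂ))⁻¹) :=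
      contDiff_const.mul ((contDiff_const.add
        (Complex.ofRealCLM.contDiff.comp (hσ k))).inv fun t => hτσ k t)
    simpa only [div_eq_mul_inv] using h.differentiable (by simp)
  exact fderiv_coord_ne h1 hjk.symm x

include hσ in
lemma bF_contDiff (j : Fin 3) : ContDiff ℝ (⊤ : ℕ∞) (bF σ τ j) := by
  have h : ContDiff ℝ (⊤ : ℕ∞) (fun y : Fin 3 → ℝ =>
      ((τ + (σ (j + 1) (y (j + 1)) : ℂ)) * (τ + (σ (j + 2) (y (j + 2)) : ℂ))) / τ ^ 2) :=
    ((contDiff_const.add (Complex.ofRealCLM.contDiff.comp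
        ((hσ (j + 1)).comp (ContinuousLinearMap.proj (R := ℝ) (φ := fun _ : Fin 3 => ℝ) (j + 1)).contDiff))).mul
      (contDiff_const.add (Complex.ofRealCLM.contDiff.comp
        ((hσ (j + 2)).comp (ContinuousLinearMap.proj (R := ℝ) (φ := fun _ : Fin 3 => ℝ) (j + 2)).contDiff)))).div_const _
  unfold bF
  exact h

include hσ in
lemma bF_fderiv (j : Fin 3) (x : Fin 3 → ℝ) :
    fderiv ℝ (bF σ τ j) x (Pi.single j 1) = 0 := by
  have hq : ∀ m : Fin 3, Differentiable ℝ (fun y : Fin 3 → ℝ => τ + (σ m (y m) : ℂ)) := by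
    intro m
    exact (differentiable_const _).add
      ((Complex.ofRealCLM.differentiable.comp ((hσ m).differentiable (by simp))).comp
        (ContinuousLinearMap.proj (R := ℝ) (φ := fun _ : Fin 3 => ℝ) m).differentiable)
  have hne1 : (j + 1 : Fin 3) ≠ j := by fin_cases j <;> decide
  have hne2 : (j + 2 : Fin 3) ≠ j := by fin_cases j <;> decide
  have hd1 : fderiv ℝ (fun y : Fin 3 → ℝ => τ + (σ (j + 1) (y (j + 1)) : ℂ)) x
      (Pi.single j 1) = 0 := by
    have hh : Differentiable ℝ (fun t : ℝ => τ + (σ (j + 1) t : ℂ)) :=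
      (differentiable_const _).add
        (Complex.ofRealCLM.differentiable.comp ((hσ _).differentiable (by simp)))
    exact fderiv_coord_ne hh hne1 x
  have hd2 : fderiv ℝ (fun y : Fin 3 → ℝ => τ + (σ (j + 2) (y (j + 2)) : ℂ)) x
      (Pi.single j 1) = 0 := by
    have hh : Differentiable ℝ (fun t : ℝ => τ + (σ (j + 2) t : ℂ)) :=
      (differentiable_const _).add
        (Complex.ofRealCLM.differentiable.comp ((hσ _).differentiable (by simp)))
    exact fderiv_coord_ne hh hne2 x
  have e : bF σ τ j = fun y : Fin 3 → ℝ =>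
      ((τ + (σ (j + 1) (y (j + 1)) : ℂ)) * (τ + (σ (j + 2) (y (j + 2)) : ℂ))) * (τ ^ 2)⁻¹ := by
    funext y
    simp only [bF, div_eq_mul_inv]
  rw [e, fderiv_mul_const ((hq (j + 1) x).fun_mul (hq (j + 2) x))]
  simp only [ContinuousLinearMap.coe_smul', Pi.smul_apply]
  rw [fderiv_fun_mul (hq (j + 1) x) (hq (j + 2) x)]
  simp only [ContinuousLinearMap.add_apply, ContinuousLinearMap.smul_apply, hd1, hd2,
    smul_zero, zero_add, add_zero, smul_eq_mul, mul_zero]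

end coeffs

section dirac_lemmas

variable (σ : Fin 3 → ℝ → ℝ) (τ : ℂ)

lemma dirac_eq (v : (Fin 3 → ℝ) → Fin 2 → ℂ) (x : Fin 3 → ℝ) :
    dirac σ τ v x = ∑ j : Fin 3, (PA j).mulVec (aF σ τ j x • pd v j x) := rfl

lemma dirac_add {v w : (Fin 3 → ℝ) → Fin 2 → ℂ} {x : Fin 3 → ℝ}
    (hv : DifferentiableAt ℝ v x) (hw : DifferentiableAt ℝ w x) :
    dirac σ τ (fun y => v y + w y) x = dirac σ τ v x + dirac σ τ w x := by
  unfold dirac stD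
  rw [← Finset.sum_add_distrib]
  refine Finset.sum_congr rfl fun j _ => ?_
  rw [pd_add hv hw, smul_add, Matrix.mulVec_add]

lemma dirac_const_smul {v : (Fin 3 → ℝ) → Fin 2 → ℂ} {x : Fin 3 → ℝ}
    (c : ℂ) (hv : DifferentiableAt ℝ v x) :
    dirac σ τ (fun y => c • v y) x = c • dirac σ τ v x := by
  unfold dirac stD
  rw [Finset.smul_sum]
  refine Finset.sum_congr rfl fun j _ => ?_
  rw [pd_const_smul hv c, smul_comm, Matrix.mulVec_smul]

end dirac_lemmas

end SHaux


/-- Stretched Helmholtz identity: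
`Π(τ,x)·(Σ Aⱼ∂̃ⱼ − τ)(Σ Aⱼ∂̃ⱼ + τ)u = p(τ,x,∂)u − τ²Π(τ,x)u` for `C²` functions `u`. -/
theorem stretched_helmholtz_identity
    (σ : Fin 3 → ℝ → ℝ) (hσ : ∀ j, ContDiff ℝ (⊤ : ℕ∞) (σ j))
    (τ : ℂ) (hτ0 : τ ≠ 0) (hτσ : ∀ (j : Fin 3) (t : ℝ), τ + σ j t ≠ 0)
    (Ω : Set (Fin 3 → ℝ)) (hΩ : IsOpen Ω)
    (u : (Fin 3 → ℝ) → (Fin 2 → ℂ)) (hu : ContDiffOn ℝ 2 u Ω) :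
    ∀ x ∈ Ω,
      (∏ i : Fin 3, (τ + σ i (x i)) / τ) •
          (dirac σ τ (fun y => dirac σ τ u y + τ • u y) x
            - τ • (dirac σ τ u x + τ • u x))
        = pOp σ τ u x - (τ ^ 2 * ∏ i : Fin 3, (τ + σ i (x i)) / τ) • u x := by
  intro x hx
  open SHaux in
  set Pr : ℂ := ∏ i : Fin 3, (τ + σ i (x i)) / τ with hPr
  have hxmem := hΩ.mem_nhds hx
  have huCA : ContDiffAt ℝ 2 u x := hu.contDiffAt hxmem
  have huD : DifferentiableAt ℝ u x := huCA.differentiableAt two_ne_zero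
  -- differentiability of the coefficient functions
  have haD : ∀ (j : Fin 3) (y : Fin 3 → ℝ), DifferentiableAt ℝ (aF σ τ j) y := fun j y =>
    ((aF_contDiff σ τ hσ hτσ j).differentiable (by simp)) y
  -- differentiability of partial derivatives of u
  have hfd : ContDiffOn ℝ 1 (fderiv ℝ u) Ω := hu.fderiv_of_isOpen hΩ (by norm_num)
  have hpduD : ∀ k : Fin 3, DifferentiableAt ℝ (fun y => pd u k y) x := by
    intro k
    have he : (fun y => pd u k y)
        = (⇑(ContinuousLinearMap.apply ℝ (Fin 2 → ℂ) (Pi.single k 1)) ∘ fderiv ℝ u) := rfl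
    have h1 : ContDiffOn ℝ 1
        (⇑(ContinuousLinearMap.apply ℝ (Fin 2 → ℂ) (Pi.single k 1)) ∘ fderiv ℝ u) Ω :=
      (ContinuousLinearMap.apply ℝ (Fin 2 → ℂ) (Pi.single k 1)).contDiff.comp_contDiffOn hfd
    rw [he]
    exact (h1.contDiffAt hxmem).differentiableAt one_ne_zero
  have hwD : ∀ k : Fin 3, DifferentiableAt ℝ (fun y => aF σ τ k y • pd u k y) x :=
    fun k => (haD k x).smul (hpduD k)
  have hdiracD : DifferentiableAt ℝ (dirac σ τ u) x := by
    have : DifferentiableAt ℝ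
        (fun y => ∑ k : Fin 3, mvL (PA k) (aF σ τ k y • pd u k y)) x :=
      DifferentiableAt.fun_sum fun k _ => (mvL (PA k)).differentiableAt.comp x (hwD k)
    exact this
  -- step 1 : reduce to second-order identity
  have h1 : dirac σ τ (fun y => dirac σ τ u y + τ • u y) x
      = dirac σ τ (dirac σ τ u) x + τ • dirac σ τ u x := by
    rw [dirac_add σ τ (w := fun y => τ • u y) hdiracD (huD.const_smul τ)]
    congr 1
    exact dirac_const_smul σ τ τ huD
  -- step 2 : the main second-order computation
  have hpd_dirac : ∀ j : Fin 3, pd (dirac σ τ u) j x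
      = ∑ k : Fin 3, (PA k).mulVec (pd (fun y => aF σ τ k y • pd u k y) j x) := by
    intro j
    rw [show (dirac σ τ u)
        = fun y => ∑ k : Fin 3, mvL (PA k) (aF σ τ k y • pd u k y) from rfl]
    have hv' : ∀ k : Fin 3, DifferentiableAt ℝ
        (fun y => mvL (PA k) (aF σ τ k y • pd u k y)) x :=
      fun k => (mvL (PA k)).differentiableAt.comp x (hwD k)
    rw [pd_sum hv' j]
    exact Finset.sum_congr rfl fun k _ => pd_clm (mvL (PA k)) (hwD k) j
  have hpdw_ne : ∀ j k : Fin 3, j ≠ k → pd (fun y => aF σ τ k y • pd u k y) j x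
      = aF σ τ k x • pd (fun y => pd u k y) j x := by
    intro j k hjk
    rw [pd_smul (haD k x) (hpduD k) j, aF_fderiv_ne σ τ hσ hτσ hjk x, zero_smul, zero_add]
  have expand : dirac σ τ (dirac σ τ u) x
      = ∑ j : Fin 3, ∑ k : Fin 3, aF σ τ j x •
          (PA j * PA k).mulVec (pd (fun y => aF σ τ k y • pd u k y) j x) := by
    rw [dirac_eq]
    refine Finset.sum_congr rfl fun j _ => ?_
    rw [hpd_dirac j, Matrix.mulVec_smul, SHaux.mulVec_sum, Finset.smul_sum]
    refine Finset.sum_congr rfl fun k _ => ?_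
    rw [Matrix.mulVec_mulVec]
  have hcross : ∀ j k : Fin 3, j ≠ k →
      aF σ τ j x • (PA j * PA k).mulVec (pd (fun y => aF σ τ k y • pd u k y) j x)
      = -(aF σ τ k x • (PA k * PA j).mulVec (pd (fun y => aF σ τ j y • pd u j y) k x)) := by
    intro j k hjk
    rw [hpdw_ne j k hjk, hpdw_ne k j hjk.symm, PA_anticomm hjk,
      pd_symm huCA k j, Matrix.neg_mulVec, Matrix.mulVec_smul, Matrix.mulVec_smul,
      smul_neg, smul_smul, smul_smul, mul_comm]
  have main : Pr • dirac σ τ (dirac σ τ u) x = pOp σ τ u x := by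
    rw [expand, sum3_cancel _ hcross, Finset.smul_sum]
    unfold pOp
    refine Finset.sum_congr rfl fun j _ => ?_
    rw [PA_sq j, Matrix.one_mulVec]
    -- rewrite the pOp coefficient as bF • (aF • ·)
    have ecoeff : (fun y : Fin 3 → ℝ =>
        (((τ + σ (j + 1) (y (j + 1))) * (τ + σ (j + 2) (y (j + 2)))) /
          (τ * (τ + σ j (y j)))) • pd u j y)
        = fun y => bF σ τ j y • (aF σ τ j y • pd u j y) := by
      funext y
      rw [smul_smul]
      congr 1
      unfold bF aF
      field_simp [hτσ j (y j)]
    rw [ecoeff, pd_smul (((bF_contDiff σ τ hσ j).differentiable (by simp)) x) (hwD j) j,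
      bF_fderiv σ τ hσ j x, zero_smul, zero_add, smul_smul]
    congr 1
    -- Pr * aF j x = bF j x
    have hprod : ∀ (f : Fin 3 → ℂ) (j : Fin 3), ∏ i, f i = f j * (f (j + 1) * f (j + 2)) := by
      intro f j
      fin_cases j
      · show ∏ i, f i = f 0 * (f 1 * f 2)
        rw [Fin.prod_univ_three]; ring
      · show ∏ i, f i = f 1 * (f 2 * f 0)
        rw [Fin.prod_univ_three]; ring
      · show ∏ i, f i = f 2 * (f 0 * f 1)
        rw [Fin.prod_univ_three]; ring
    rw [hPr, hprod (fun i => (τ + (σ i (x i) : ℂ)) / τ) j]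
    unfold aF bF
    field_simp [hτσ j (x j)]
  -- conclusion
  rw [h1]
  have : dirac σ τ (dirac σ τ u) x + τ • dirac σ τ u x
      - τ • (dirac σ τ u x + τ • u x)
      = dirac σ τ (dirac σ τ u) x - (τ * τ) • u x := by
    rw [smul_add, smul_smul]
    abel
  rw [this, smul_sub, main, smul_smul]
  congr 2
  ring
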